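/- arXiv:0712.2997 — 2 statements merged into one kernel-verified Lean document; each statement's English description precedes it below -/
import Mathlib

section
/- If a is an algebraic number with |σ(a)| = 1 for all complex embeddings σ, and a is an algebraic integer, then a is a root of unity (Kronecker's theorem). -/
open IntermediateField

/-- A number field (given as a subfield of `ℂ`) is totally real if every
complex embedding has image contained in `ℝ`. -/
def TotallyReal (F : IntermediateField ℚ ℂ) : Prop :=
  ∀ σ : F →+* ℂ, ∀ x : F, (σ x).im = 0

/-- A number field (given as a subfield of `ℂ`) is totally imaginary if no
complex embedding has image contained in `ℝ`. -/
def TotallyImaginary (K : IntermediateField ℚ ℂ) : Prop :=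
  ∀ σ : K →+* ℂ, ∃ x : K, (σ x).im ≠ 0

/-- A CM field: a totally imaginary quadratic extension of a totally real subfield. -/
def IsCMField (K : IntermediateField ℚ ℂ) : Prop :=
  FiniteDimensional ℚ K ∧ TotallyImaginary K ∧
    ∃ F : IntermediateField ℚ ℂ, F ≤ K ∧ TotallyReal F ∧
      Module.finrank ℚ K = 2 * Module.finrank ℚ F

/-- Kronecker's theorem: an algebraic integer all of whose complex conjugates
have absolute value 1 is a root of unity. -/
theorem kronecker_root_of_unity (a : ℂ) (ha : IsIntegral ℤ a)
    (hW : ∀ σ : ℚ⟮a⟯ →+* ℂ,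
      ‖σ ⟨a, mem_adjoin_simple_self ℚ a⟩‖ = 1) :
    ∃ n : ℕ, 0 < n ∧ a ^ n = 1 := by
  have ha' : IsIntegral ℚ a := ha.tower_top
  haveI : FiniteDimensional ℚ ℚ⟮a⟯ := adjoin.finiteDimensional ha'
  haveI : NumberField ℚ⟮a⟯ := {}
  set x : ℚ⟮a⟯ := ⟨a, mem_adjoin_simple_self ℚ a⟩
  have hxi : IsIntegral ℤ x := by
    refine (isIntegral_algebraMap_iff (algebraMap ℚ⟮a⟯ ℂ).injective).mp ?_
    simpa using ha
  obtain ⟨n, hn, hxn⟩ := NumberField.Embeddings.pow_eq_one_of_norm_eq_one (A := ℂ) ℚ⟮a⟯ hxi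
    (fun φ => by simpa using hW φ)
  exact ⟨n, hn, by simpa using congrArg Subtype.val hxn⟩
end

section
/- If a number field K has at least one embedding into ℚₗ (i.e. some conjugate of K is contained in ℚₗ), then every ℓ-adic Weil number in K is a root of unity. -/
open IntermediateField

/-- The subfield `ℚₗ` of a fixed algebraic closure of `ℚ_[ℓ]`, viewed as an
intermediate field of `ℚ ⊆ ℚ̄ₗ` (it is the image of `ℚ_[ℓ]`, which already
contains `ℚ`, so adjoining it changes nothing). -/
noncomputable def Qell (ℓ : ℕ) [Fact ℓ.Prime] :
    IntermediateField ℚ (AlgebraicClosure ℚ_[ℓ]) :=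
  IntermediateField.adjoin ℚ (Set.range (algebraMap ℚ_[ℓ] (AlgebraicClosure ℚ_[ℓ])))

/-- A number field `F ⊆ ℚ̄ₗ` is totally `ℓ`-split (totally `ℓ`-adic) if every
`ℚ`-embedding of `F` into `ℚ̄ₗ` has image contained in `ℚₗ`. -/
def TotallySplit (ℓ : ℕ) [Fact ℓ.Prime]
    (F : IntermediateField ℚ (AlgebraicClosure ℚ_[ℓ])) : Prop :=
  ∀ σ : ↥F →ₐ[ℚ] AlgebraicClosure ℚ_[ℓ], ∀ x : ↥F, σ x ∈ Qell ℓ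

/-- `a ∈ ℚ̄ₗ` (algebraic over `ℚ`) is an `ℓ`-adic Weil number: for every
conjugate `b` of `a` (root of the minimal polynomial of `a`), the norm of `b`
from the splitting field `K_a` down to `H_a = K_a ∩ ℚₗ` is a root of unity. -/
def IsLAdicWeil (ℓ : ℕ) [Fact ℓ.Prime] (a : AlgebraicClosure ℚ_[ℓ]) : Prop :=
  ∀ b : AlgebraicClosure ℚ_[ℓ],
    ∀ hb : b ∈ (minpoly ℚ a).rootSet (AlgebraicClosure ℚ_[ℓ]),
    letI Ka := IntermediateField.adjoin ℚ ((minpoly ℚ a).rootSet (AlgebraicClosure ℚ_[ℓ]))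
    letI Ha := Ka ⊓ Qell ℓ
    letI : Algebra ↥Ha ↥Ka :=
      (IntermediateField.inclusion (inf_le_left : Ha ≤ Ka)).toRingHom.toAlgebra
    ∃ n : ℕ, 0 < n ∧
      (Algebra.norm ↥Ha (⟨b, IntermediateField.subset_adjoin ℚ _ hb⟩ : ↥Ka)) ^ n = 1
set_option maxHeartbeats 1000000
set_option synthInstance.maxHeartbeats 400000

/-- If a number field `K` admits an embedding into `ℚₗ`, then every `ℓ`-adic
Weil number in `K` is a root of unity. -/
theorem lAdicWeil_isRootOfUnity_of_embedding (ℓ : ℕ) [Fact ℓ.Prime]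
    (K : IntermediateField ℚ (AlgebraicClosure ℚ_[ℓ])) [FiniteDimensional ℚ K]
    (hemb : ∃ σ : ↥K →ₐ[ℚ] AlgebraicClosure ℚ_[ℓ], ∀ x : ↥K, σ x ∈ Qell ℓ)
    (a : ↥K) (ha : a ≠ 0) (hW : IsLAdicWeil ℓ (a : AlgebraicClosure ℚ_[ℓ])) :
    ∃ n : ℕ, 0 < n ∧ a ^ n = 1 := by
  classical
  obtain ⟨σ, hσ⟩ := hemb
  have hintK : IsIntegral ℚ a := IsIntegral.of_finite ℚ a
  have hint : IsIntegral ℚ (a : AlgebraicClosure ℚ_[ℓ]) := hintK.map K.val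
  have hmin : minpoly ℚ ((a : AlgebraicClosure ℚ_[ℓ])) = minpoly ℚ a :=
    minpoly.algebraMap_eq (algebraMap (↥K) (AlgebraicClosure ℚ_[ℓ])).injective a
  have hb : σ a ∈ (minpoly ℚ ((a : AlgebraicClosure ℚ_[ℓ]))).rootSet (AlgebraicClosure ℚ_[ℓ]) := by
    rw [Polynomial.mem_rootSet]
    refine ⟨minpoly.ne_zero hint, ?_⟩
    rw [hmin, Polynomial.aeval_algHom_apply, minpoly.aeval, map_zero]
  obtain ⟨n, hn, hnorm⟩ := hW (σ a) hb
  letI Ka := IntermediateField.adjoin ℚ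
    ((minpoly ℚ ((a : AlgebraicClosure ℚ_[ℓ]))).rootSet (AlgebraicClosure ℚ_[ℓ]))
  letI Ha := Ka ⊓ Qell ℓ
  letI : Algebra ↥Ha ↥Ka :=
    (IntermediateField.inclusion (inf_le_left : Ha ≤ Ka)).toRingHom.toAlgebra
  haveI : IsScalarTower ℚ ↥Ha ↥Ka := IsScalarTower.of_algebraMap_eq (fun x => rfl)
  haveI : FiniteDimensional ℚ ↥Ka :=
    IntermediateField.finiteDimensional_adjoin (fun x hx =>
      IsAlgebraic.isIntegral ⟨_, minpoly.ne_zero hint, (Polynomial.mem_rootSet.mp hx).2⟩)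
  haveI : FiniteDimensional ↥Ha ↥Ka := FiniteDimensional.right ℚ ↥Ha ↥Ka
  have hd : 0 < Module.finrank ↥Ha ↥Ka := Module.finrank_pos
  have hHa : σ a ∈ Ha := IntermediateField.mem_inf.mpr
    ⟨IntermediateField.subset_adjoin ℚ _ hb, hσ a⟩
  have heq : (⟨σ a, IntermediateField.subset_adjoin ℚ _ hb⟩ : ↥Ka)
      = algebraMap ↥Ha ↥Ka ⟨σ a, hHa⟩ := rfl
  rw [heq, Algebra.norm_algebraMap] at hnorm
  have h1 := congrArg (algebraMap ↥Ha (AlgebraicClosure ℚ_[ℓ])) hnorm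
  simp only [map_pow, map_one] at h1
  have hpow : σ (a ^ (Module.finrank ↥Ha ↥Ka * n)) = σ 1 := by
    rw [map_one, map_pow, pow_mul]
    exact h1
  exact ⟨_, Nat.mul_pos hd hn, σ.toRingHom.injective hpow⟩
end
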